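/- A graph is cop-win if and only if it has finite corner rank. Moreover, if G is an r-cop-win graph (r ∈ {0,1}) with finite corner rank α ≥ 2, then capt(G) = α − r. -/

import Mathlib

open Classical

/-- A finite reflexive graph: adjacency is symmetric and every vertex is
adjacent to itself (closed neighborhood `N[v] = {u | Adj v u}`). -/
structure RefGraph (V : Type*) where
  Adj : V → V → Prop
  symm : ∀ u v, Adj u v → Adj v u
  refl : ∀ v, Adj v v

namespace RefGraph

variable {V : Type*}

/-- `w` strictly corners `v` within the induced subgraph on `S`,
i.e. `N_S[v] ⊊ N_S[w]`. -/
def StrictCornersIn (G : RefGraph V) (S : Set V) (w v : V) : Prop :=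
  w ∈ S ∧ v ∈ S ∧ (∀ u ∈ S, G.Adj v u → G.Adj w u) ∧ ∃ u ∈ S, G.Adj w u ∧ ¬ G.Adj v u

/-- `v` is a strict corner of the induced subgraph on `S`. -/
def IsStrictCorner (G : RefGraph V) (S : Set V) (v : V) : Prop :=
  ∃ w, G.StrictCornersIn S w v

/-- `S` induces a clique. -/
def IsCliqueSet (G : RefGraph V) (S : Set V) : Prop :=
  ∀ u ∈ S, ∀ v ∈ S, G.Adj u v

/-- `lvl k` is the vertex set of the graph `G_{k+1}` of the corner ranking
procedure: start with all vertices and repeatedly delete all strict corners. -/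
def lvl (G : RefGraph V) : ℕ → Set V
  | 0 => Set.univ
  | k + 1 => {v ∈ G.lvl k | ¬ G.IsStrictCorner (G.lvl k) v}

/-- The corner rank of a vertex: the stage (1-indexed) at which it is a strict
corner, or at which the remaining graph is a clique; `∞` if neither ever occurs. -/
noncomputable def cr (G : RefGraph V) (v : V) : ℕ∞ :=
  sInf {n : ℕ∞ | ∃ m : ℕ, n = (m : ℕ∞) + 1 ∧ v ∈ G.lvl m ∧
    (G.IsStrictCorner (G.lvl m) v ∨ G.IsCliqueSet (G.lvl m))}

/-- The vertex set of `Gₖ`: the vertices of corner rank at least `k`. -/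
def GkSet (G : RefGraph V) (k : ℕ) : Set V := {v | (k : ℕ∞) ≤ G.cr v}

/-- The corner rank of the graph: the largest corner rank of a vertex. -/
noncomputable def crGraph (G : RefGraph V) [Fintype V] : ℕ∞ :=
  Finset.univ.sup fun v => G.cr v

/-- The projection map `fₖ` on a single vertex `u` of `Gₖ`. -/
noncomputable def fk (G : RefGraph V) (k : ℕ) (u : V) : Set V :=
  if (k : ℕ∞) < G.cr u then {u}
  else {w | w ∈ G.GkSet (k + 1) ∧ G.StrictCornersIn (G.GkSet k) w u}

/-- The projection map `Fₖ`: `F₁` is the identity and `Fₖ₊₁ = fₖ ∘ Fₖ`. -/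
noncomputable def Fk (G : RefGraph V) : ℕ → V → Set V
  | 0, v => {v}
  | 1, v => {v}
  | k + 2, v => ⋃ u ∈ G.Fk (k + 1) v, G.fk (k + 1) u

/-- `r` is `k`-cornered by `c`: for `k = 0`, `c = r`; for `k ≥ 1`, some
`r' ∈ Fₖ(r)` is cornered by `c` in the subgraph induced by `V(Gₖ) ∪ {c}`. -/
def kCornered (G : RefGraph V) : ℕ → V → V → Prop
  | 0, c, r => c = r
  | k + 1, c, r => ∃ r' ∈ G.Fk (k + 1) r,
      ∀ u, (u ∈ G.GkSet (k + 1) ∨ u = c) → G.Adj r' u → G.Adj c u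

/-- With the cop at `c`, the vertex `r` is `k`-proj-safe: `cr r ≥ k` and some
`c' ∈ Fₖ(c)` is not adjacent to `r`. -/
def ProjSafe (G : RefGraph V) (k : ℕ) (c r : V) : Prop :=
  (k : ℕ∞) ≤ G.cr r ∧ ∃ c' ∈ G.Fk k c, ¬ G.Adj c' r

/-- The cop at `c` can win within `k` cop moves against the robber at `r`,
robber to move. -/
def WinWithin (G : RefGraph V) : ℕ → V → V → Prop
  | 0, c, r => c = r
  | k + 1, c, r => c = r ∨ ∀ r₁, G.Adj r r₁ → ∃ c₁, G.Adj c c₁ ∧ G.WinWithin k c₁ r₁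

/-- The cop at `c` can guarantee catching the robber at `r` within `n` cop
moves, cop to move. -/
def CanCatch (G : RefGraph V) : ℕ → V → V → Prop
  | 0, c, r => c = r
  | n + 1, c, r => c = r ∨ ∃ c', G.Adj c c' ∧
      (c' = r ∨ ∀ r', G.Adj r r' → G.CanCatch n c' r')

/-- The cop has a winning strategy: some initial placement from which she can
guarantee capture in some bounded number of moves, whatever the robber does. -/
def CopWin (G : RefGraph V) : Prop :=
  ∃ (n : ℕ) (c₀ : V), ∀ r₀ : V, G.CanCatch n c₀ r₀

/-- The capture time: the least `n` such that the cop has an initial placement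
guaranteeing capture within `n` cop moves. -/
noncomputable def capt (G : RefGraph V) : ℕ :=
  sInf {n : ℕ | ∃ c₀ : V, ∀ r₀ : V, G.CanCatch n c₀ r₀}

/-- A graph of finite corner rank `α` is `1`-cop-win if some vertex of corner
rank `α` is adjacent to every vertex of `G_{α-1}`. -/
def OneCopWin (G : RefGraph V) (α : ℕ) : Prop :=
  ∃ x, G.cr x = (α : ℕ∞) ∧ ∀ u, ((α - 1 : ℕ) : ℕ∞) ≤ G.cr u → G.Adj x u

/-- `r`-cop-win for `r ∈ {0,1}`. -/
def RCopWin (G : RefGraph V) (r α : ℕ) : Prop :=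
  (r = 1 ∧ G.OneCopWin α) ∨ (r = 0 ∧ ¬ G.OneCopWin α)

/-- The largest finite corner rank occurring in `G` (0 if none occurs). -/
noncomputable def gammaMax (G : RefGraph V) : ℕ :=
  sSup {n : ℕ | ∃ v, G.cr v = (n : ℕ∞)}

/-- `F_∞`: equal to `F_{γ+1}` where `γ` is the largest finite corner rank, and
the identity (`F₁`) when no vertex has finite corner rank. -/
noncomputable def Finf (G : RefGraph V) : V → Set V :=
  G.Fk (G.gammaMax + 1)

/-- `e` lists the vertices as a dismantling ordering: every vertex except the
last is cornered, in the induced subgraph on it and the later vertices, by some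
later vertex. -/
def IsDismantlingOrdering (G : RefGraph V) {n : ℕ} (e : Fin n ≃ V) : Prop :=
  ∀ i : Fin n, (i : ℕ) + 1 < n →
    ∃ j : Fin n, i < j ∧ e j ≠ e i ∧
      ∀ u, (∃ m : Fin n, i ≤ m ∧ e m = u) → G.Adj (e i) u → G.Adj (e j) u

/-- `G` has a dismantling ordering. -/
def HasDismantling (G : RefGraph V) [Fintype V] : Prop :=
  ∃ e : Fin (Fintype.card V) ≃ V, G.IsDismantlingOrdering e

/-!
Sending every strict corner of `lvl m` to a cornering vertex with maximal neighbourhood, which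
survives to `lvl (m + 1)`, and composing these steps gives retractions `V → lvl k` that are graph
homomorphisms fixing `lvl k`.

A cop adjacent to the whole neighbourhood in `lvl k` of the robber's retraction wins within
`k + 1` moves: she steps onto the retraction of the robber's new position, and the situation
repeats one level lower. Dually, a robber on `lvl k` who is not adjacent to the retraction of the
cop's position can always step to a vertex of `lvl (k - 1)` with the same property, since a vertex
of `lvl k` is not a strict corner of `lvl (k - 1)`; so he survives `k + 1` moves. Hence the cop
wins iff some level is a clique, which is the case iff the corner rank is finite. If `lvl (α - 1)`
is the first clique level, the cop starting there wins within `α` moves, and within `α - 1` if a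
vertex dominates `lvl (α - 2)`; otherwise no start vertex does better.
-/

variable (G : RefGraph V)

lemma lvl_antitone : Antitone G.lvl :=
  antitone_nat_of_succ_le fun _ _ hv => hv.1

lemma adj_of_mem_lvl_succ {m : ℕ} {r w u : V} (hr : r ∈ G.lvl (m + 1)) (hw : w ∈ G.lvl m)
    (hrw : ∀ x ∈ G.lvl m, G.Adj r x → G.Adj w x) (hu : u ∈ G.lvl m) (hwu : G.Adj w u) :
    G.Adj r u := by
  by_contra hru
  exact hr.2 ⟨w, hw, hr.1, hrw, u, hu, hwu, hru⟩

lemma isCliqueSet_lvl_succ_of_forall_adj {m : ℕ} {d : V} (hd : d ∈ G.lvl m)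
    (hdom : ∀ u ∈ G.lvl m, G.Adj d u) : G.IsCliqueSet (G.lvl (m + 1)) :=
  fun _ hu v hv => G.adj_of_mem_lvl_succ hu hd (fun x hx _ => hdom x hx) hv.1 (hdom v hv.1)

lemma mem_lvl_succ_of_forall_adj {m : ℕ} {d : V} (hd : d ∈ G.lvl m)
    (hdom : ∀ u ∈ G.lvl m, G.Adj d u) : d ∈ G.lvl (m + 1) :=
  ⟨hd, fun ⟨_, _, _, _, u, hu, _, hdu⟩ => hdu (hdom u hu)⟩

/-- Take a cornering vertex whose neighbourhood in `S` is maximal. -/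
lemma exists_strictCornersIn_not_isStrictCorner [Finite V] {S : Set V} {v : V}
    (hv : G.IsStrictCorner S v) : ∃ w, G.StrictCornersIn S w v ∧ ¬ G.IsStrictCorner S w := by
  obtain ⟨w, hw, hmax⟩ := Set.Finite.exists_maximalFor (fun w => {u ∈ S | G.Adj w u})
    {w | G.StrictCornersIn S w v} (Set.toFinite _) hv
  refine ⟨w, hw, fun ⟨x, hxS, _, hwx, u, hu, hxu, hwu⟩ => hwu ?_⟩
  obtain ⟨-, hvS, hvw, u', hu', hwu', hvu'⟩ := hw
  have hxv : G.StrictCornersIn S x v :=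
    ⟨hxS, hvS, fun y hy hvy => hwx y hy (hvw y hy hvy), u', hu', hwx u' hu' hwu', hvu'⟩
  exact (hmax hxv (fun y ⟨hy, hwy⟩ => ⟨hy, hwx y hy hwy⟩) ⟨hu, hxu⟩).2

lemma lvl_nonempty [Finite V] [Nonempty V] (m : ℕ) : (G.lvl m).Nonempty := by
  induction m with
  | zero => exact Set.univ_nonempty
  | succ m ih =>
    obtain ⟨v, hv⟩ := ih
    by_cases hcorner : G.IsStrictCorner (G.lvl m) v
    · obtain ⟨w, hwv, hw⟩ := G.exists_strictCornersIn_not_isStrictCorner hcorner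
      exact ⟨w, hwv.1, hw⟩
    · exact ⟨v, hv, hcorner⟩

lemma exists_forall_mem_lvl [Finite V] [Nonempty V] : ∃ v, ∀ k, v ∈ G.lvl k := by
  obtain ⟨M, hM⟩ := WellFoundedLT.antitone_chain_condition G.lvl_antitone
  obtain ⟨v, hv⟩ := G.lvl_nonempty M
  exact ⟨v, fun k => G.lvl_antitone (le_max_left k M) (hM _ (le_max_right k M) ▸ hv)⟩

noncomputable def cornerStep [Finite V] (m : ℕ) (u : V) : V :=
  if h : G.IsStrictCorner (G.lvl m) u then
    (G.exists_strictCornersIn_not_isStrictCorner h).choose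
  else u

lemma cornerStep_mem [Finite V] {m : ℕ} {u : V} (hu : u ∈ G.lvl m) :
    G.cornerStep m u ∈ G.lvl (m + 1) := by
  unfold cornerStep
  split_ifs with h
  · obtain ⟨hcorner, hnot⟩ := (G.exists_strictCornersIn_not_isStrictCorner h).choose_spec
    exact ⟨hcorner.1, hnot⟩
  · exact ⟨hu, h⟩

lemma adj_cornerStep [Finite V] {m : ℕ} {u x : V} (hx : x ∈ G.lvl m) (hux : G.Adj u x) :
    G.Adj (G.cornerStep m u) x := by
  unfold cornerStep
  split_ifs with h
  · exact (G.exists_strictCornersIn_not_isStrictCorner h).choose_spec.1.2.2.1 x hx hux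
  · exact hux

lemma cornerStep_of_mem [Finite V] {m : ℕ} {u : V} (hu : u ∈ G.lvl (m + 1)) :
    G.cornerStep m u = u :=
  dif_neg hu.2

noncomputable def retract [Finite V] : ℕ → V → V
  | 0, v => v
  | m + 1, v => G.cornerStep m (retract m v)

lemma retract_mem [Finite V] (k : ℕ) (v : V) : G.retract k v ∈ G.lvl k := by
  induction k with
  | zero => trivial
  | succ k ih => exact G.cornerStep_mem ih

lemma retract_of_mem [Finite V] {k : ℕ} {v : V} (hv : v ∈ G.lvl k) : G.retract k v = v := by
  induction k with
  | zero => rfl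
  | succ k ih =>
    change G.cornerStep k (G.retract k v) = v
    rw [ih (G.lvl_antitone k.le_succ hv), G.cornerStep_of_mem hv]

lemma retract_adj [Finite V] (k : ℕ) {u v : V} (huv : G.Adj u v) :
    G.Adj (G.retract k u) (G.retract k v) := by
  induction k with
  | zero => exact huv
  | succ k ih =>
    have hstep : G.Adj (G.cornerStep k (G.retract k u)) (G.retract k v) :=
      G.adj_cornerStep (G.retract_mem k v) ih
    exact G.symm _ _ (G.adj_cornerStep (G.lvl_antitone k.le_succ (G.cornerStep_mem
      (G.retract_mem k u))) (G.symm _ _ hstep))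

lemma canCatch_succ {n : ℕ} {c r : V} (h : G.CanCatch n c r) : G.CanCatch (n + 1) c r := by
  induction n generalizing c r with
  | zero => exact Or.inl h
  | succ n ih =>
    rcases h with h | ⟨c', hcc', h | h⟩
    · exact Or.inl h
    · exact Or.inr ⟨c', hcc', Or.inl h⟩
    · exact Or.inr ⟨c', hcc', Or.inr fun r' hrr' => ih (h r' hrr')⟩

lemma canCatch_mono {m n : ℕ} (hmn : m ≤ n) {c r : V} (h : G.CanCatch m c r) :
    G.CanCatch n c r :=
  monotone_nat_of_le_succ (f := fun n => G.CanCatch n c r) (fun _ => G.canCatch_succ) hmn h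

/-- The cop moves onto the retraction of the robber's new position, which corners its
retraction one level down, so the hypothesis descends one level with each move. -/
lemma canCatch_of_forall_adj_retract [Finite V] {k : ℕ} {c r r' : V}
    (hc : ∀ u ∈ G.lvl k, G.Adj (G.retract k r) u → G.Adj c u) (hrr' : G.Adj r r') :
    G.CanCatch (k + 1) c r' := by
  induction k generalizing c r r' with
  | zero => exact Or.inr ⟨r', hc r' trivial hrr', Or.inl rfl⟩
  | succ k ih =>
    refine Or.inr ⟨G.retract (k + 1) r', ?_, Or.inr fun r'' hr'r'' => ?_⟩
    · exact hc _ (G.retract_mem _ _) (G.retract_adj _ hrr')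
    · exact ih (fun u hu => G.adj_cornerStep hu) hr'r''

lemma canCatch_of_forall_adj [Finite V] {k : ℕ} {x : V} (hx : ∀ u ∈ G.lvl k, G.Adj x u)
    (r : V) : G.CanCatch (k + 1) x r :=
  G.canCatch_of_forall_adj_retract (fun u hu _ => hx u hu) (G.refl r)

/-- Otherwise `r` would be cornered in `lvl m` by the retraction of `c'` to `lvl (m + 1)`,
hence have the same neighbours there, among them the retraction of `c`. -/
lemma exists_adj_not_adj_retract [Finite V] {m : ℕ} {c c' r : V} (hr : r ∈ G.lvl (m + 1))
    (hcr : ¬ G.Adj (G.retract (m + 1) c) r) (hcc' : G.Adj c c') :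
    ∃ r' ∈ G.lvl m, G.Adj r r' ∧ ¬ G.Adj (G.retract m c') r' := by
  by_contra! hdom
  have hlvl : ∀ v, G.retract (m + 1) v ∈ G.lvl m :=
    fun v => G.lvl_antitone m.le_succ (G.retract_mem _ v)
  refine hcr (G.symm _ _ (G.adj_of_mem_lvl_succ hr (hlvl c') ?_ (hlvl c)
    (G.symm _ _ (G.retract_adj _ hcc'))))
  exact fun u hu hru => G.adj_cornerStep hu (hdom u hu hru)

lemma not_canCatch_of_not_adj_retract [Finite V] {k : ℕ} {c r : V} (hr : r ∈ G.lvl k)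
    (hcr : ¬ G.Adj (G.retract k c) r) : ¬ G.CanCatch (k + 1) c r := by
  have hne : ∀ c', G.Adj c c' → c' ≠ r := by
    rintro c' hcc' rfl
    exact hcr (by simpa only [G.retract_of_mem hr] using G.retract_adj k hcc')
  rintro (rfl | ⟨c', hcc', hc'r | hc'⟩)
  · exact hne _ (G.refl _) rfl
  · exact hne c' hcc' hc'r
  cases k with
  | zero => exact hne c' hcc' (hc' r (G.refl r))
  | succ k =>
    obtain ⟨r', hr', hrr', hc'r'⟩ := G.exists_adj_not_adj_retract hr hcr hcc'
    exact not_canCatch_of_not_adj_retract hr' hc'r' (hc' r' hrr')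

lemma exists_not_canCatch [Finite V] {k : ℕ}
    (hk : ∀ d ∈ G.lvl k, ∃ u ∈ G.lvl k, ¬ G.Adj d u) (c : V) :
    ∃ r, ¬ G.CanCatch (k + 1) c r := by
  obtain ⟨r, hr, hcr⟩ := hk _ (G.retract_mem k c)
  exact ⟨r, G.not_canCatch_of_not_adj_retract hr hcr⟩

lemma exists_not_canCatch_of_not_isCliqueSet [Finite V] {k : ℕ}
    (hk : ¬ G.IsCliqueSet (G.lvl k)) (c : V) : ∃ r, ¬ G.CanCatch k c r := by
  cases k with
  | zero =>
    by_contra! h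
    refine hk fun u _ v _ => ?_
    obtain rfl : c = u := h u
    obtain rfl : c = v := h v
    exact G.refl c
  | succ k =>
    refine G.exists_not_canCatch (fun d hd => ?_) c
    by_contra! hdom
    exact hk (G.isCliqueSet_lvl_succ_of_forall_adj hd hdom)

lemma copWin_iff_exists_isCliqueSet [Finite V] [Nonempty V] :
    G.CopWin ↔ ∃ m, G.IsCliqueSet (G.lvl m) := by
  constructor
  · rintro ⟨n, c, hc⟩
    by_contra! h
    obtain ⟨r, hr⟩ := G.exists_not_canCatch_of_not_isCliqueSet (h n) c
    exact hr (hc r)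
  · rintro ⟨m, hm⟩
    obtain ⟨x, hx⟩ := G.lvl_nonempty m
    exact ⟨m + 1, x, G.canCatch_of_forall_adj (hm x hx)⟩

lemma le_cr_iff {k : ℕ} {v : V} :
    (k : ℕ∞) + 1 ≤ G.cr v ↔ v ∈ G.lvl k ∧ ∀ m < k, ¬ G.IsCliqueSet (G.lvl m) := by
  have hcr : (k : ℕ∞) + 1 ≤ G.cr v ↔ ∀ m, v ∈ G.lvl m →
      G.IsStrictCorner (G.lvl m) v ∨ G.IsCliqueSet (G.lvl m) → k ≤ m := by
    simp only [cr, le_sInf_iff, Set.mem_ofPred_eq, forall_exists_index, and_imp]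
    constructor
    · intro h m hv hstop
      exact Nat.succ_le_succ_iff.1 (by exact_mod_cast h _ m rfl hv hstop)
    · rintro h _ m rfl hv hstop
      exact_mod_cast Nat.succ_le_succ (h m hv hstop)
  rw [hcr]
  constructor
  · intro h
    have hmem : ∀ j ≤ k, v ∈ G.lvl j := by
      intro j hj
      induction j with
      | zero => trivial
      | succ j ih =>
        have hv := ih (by omega)
        exact ⟨hv, fun hcorner => absurd (h j hv (Or.inl hcorner)) (by omega)⟩
    exact ⟨hmem k le_rfl, fun m hm hcl => absurd (h m (hmem m hm.le) (Or.inr hcl)) (by omega)⟩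
  · rintro ⟨hv, hno⟩ m hm hstop
    by_contra! hmk
    rcases hstop with hcorner | hcl
    · exact (G.lvl_antitone hmk hv).2 hcorner
    · exact hno m hmk hcl

lemma cr_le_of_isCliqueSet {m : ℕ} (hm : G.IsCliqueSet (G.lvl m)) (v : V) :
    G.cr v ≤ m + 1 := by
  by_contra! h
  have hle : ((m + 1 : ℕ) : ℕ∞) + 1 ≤ G.cr v := by
    push_cast
    exact Order.add_one_le_of_lt h
  exact (G.le_cr_iff.1 hle).2 m m.lt_succ_self hm

lemma cr_le_crGraph [Fintype V] (v : V) : G.cr v ≤ G.crGraph :=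
  Finset.le_sup (f := G.cr) (Finset.mem_univ v)

lemma crGraph_ne_top_iff_exists_isCliqueSet [Fintype V] [Nonempty V] :
    G.crGraph ≠ ⊤ ↔ ∃ m, G.IsCliqueSet (G.lvl m) := by
  constructor
  · intro h
    by_contra! hno
    obtain ⟨v, hv⟩ := G.exists_forall_mem_lvl
    have hcr : G.cr v = ⊤ := ENat.eq_top_iff_forall_ge.2 fun k =>
      le_trans le_self_add (G.le_cr_iff.2 ⟨hv k, fun m _ => hno m⟩)
    exact h (top_le_iff.1 (hcr ▸ G.cr_le_crGraph v))
  · rintro ⟨m, hm⟩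
    refine ne_top_of_le_ne_top (ENat.natCast_ne_top (m + 1)) (Finset.sup_le fun v _ => ?_)
    exact_mod_cast G.cr_le_of_isCliqueSet hm v

lemma isCliqueSet_lvl_of_crGraph_eq [Fintype V] [Nonempty V] {k : ℕ}
    (h : G.crGraph = ((k + 1 : ℕ) : ℕ∞)) :
    G.IsCliqueSet (G.lvl k) ∧ ∀ m < k, ¬ G.IsCliqueSet (G.lvl m) := by
  obtain ⟨x, -, hx⟩ := Finset.exists_mem_eq_sup Finset.univ Finset.univ_nonempty G.cr
  have hkx : (k : ℕ∞) + 1 ≤ G.cr x := by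
    rw [← hx]
    exact_mod_cast h.ge
  obtain ⟨-, hno⟩ := G.le_cr_iff.1 hkx
  refine ⟨?_, hno⟩
  by_contra hk
  obtain ⟨w, hw⟩ := G.lvl_nonempty (k + 1)
  have hkw : ((k + 1 : ℕ) : ℕ∞) + 1 ≤ G.cr w := by
    refine G.le_cr_iff.2 ⟨hw, fun m hm => ?_⟩
    rcases Nat.lt_succ_iff_lt_or_eq.1 hm with hm | rfl
    exacts [hno m hm, hk]
  have hle := (hkw.trans (G.cr_le_crGraph w)).trans h.le
  norm_cast at hle
  omega

lemma oneCopWin_iff [Fintype V] [Nonempty V] {k : ℕ} (h : G.crGraph = ((k + 2 : ℕ) : ℕ∞)) :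
    G.OneCopWin (k + 2) ↔ ∃ x ∈ G.lvl k, ∀ u ∈ G.lvl k, G.Adj x u := by
  have hno := (G.isCliqueSet_lvl_of_crGraph_eq h).2
  have hmem : ∀ u, ((k + 1 : ℕ) : ℕ∞) ≤ G.cr u ↔ u ∈ G.lvl k := fun u => by
    push_cast
    exact G.le_cr_iff.trans ⟨And.left, fun hu => ⟨hu, fun m hm => hno m (by omega)⟩⟩
  constructor
  · rintro ⟨x, hx, hdom⟩
    have hx' : ((k + 1 : ℕ) : ℕ∞) + 1 ≤ G.cr x := by rw [hx]; push_cast; rfl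
    have hxk : x ∈ G.lvl (k + 1) := (G.le_cr_iff.1 hx').1
    exact ⟨x, G.lvl_antitone k.le_succ hxk, fun u hu => hdom u ((hmem u).2 hu)⟩
  · rintro ⟨x, hx, hdom⟩
    refine ⟨x, le_antisymm (h ▸ G.cr_le_crGraph x) ?_, fun u hu => hdom u ((hmem u).1 hu)⟩
    have hxcr := G.le_cr_iff.2 ⟨G.mem_lvl_succ_of_forall_adj hx hdom, hno⟩
    push_cast at hxcr ⊢
    exact hxcr

lemma capt_eq_succ {n : ℕ} (hcatch : ∃ c, ∀ r, G.CanCatch (n + 1) c r)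
    (hescape : ∀ c, ∃ r, ¬ G.CanCatch n c r) : G.capt = n + 1 := by
  refine (Nat.sInf_upward_closed_eq_succ_iff ?_ n).2 ⟨hcatch, ?_⟩
  · rintro a b hab ⟨c, hc⟩
    exact ⟨c, fun r => G.canCatch_mono hab (hc r)⟩
  · rintro ⟨c, hc⟩
    obtain ⟨r, hr⟩ := hescape c
    exact hr (hc r)

lemma capt_eq_of_oneCopWin [Fintype V] [Nonempty V] {k : ℕ}
    (h : G.crGraph = ((k + 2 : ℕ) : ℕ∞)) (hone : G.OneCopWin (k + 2)) : G.capt = k + 1 := by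
  obtain ⟨x, -, hx⟩ := (G.oneCopWin_iff h).1 hone
  exact G.capt_eq_succ ⟨x, G.canCatch_of_forall_adj hx⟩
    (G.exists_not_canCatch_of_not_isCliqueSet
      ((G.isCliqueSet_lvl_of_crGraph_eq h).2 k k.lt_succ_self))

lemma capt_eq_of_not_oneCopWin [Fintype V] [Nonempty V] {k : ℕ}
    (h : G.crGraph = ((k + 2 : ℕ) : ℕ∞)) (hzero : ¬ G.OneCopWin (k + 2)) :
    G.capt = k + 2 := by
  obtain ⟨x, hx⟩ := G.lvl_nonempty (k + 1)
  have hcatch := G.canCatch_of_forall_adj ((G.isCliqueSet_lvl_of_crGraph_eq h).1 x hx)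
  refine G.capt_eq_succ ⟨x, hcatch⟩ (G.exists_not_canCatch fun d hd => ?_)
  by_contra! hdom
  exact hzero ((G.oneCopWin_iff h).2 ⟨d, hd, hdom⟩)

end RefGraph

/-- A graph is cop-win iff it has finite corner rank; moreover if
`G` is `r`-cop-win (`r ∈ {0,1}`) of finite corner rank `α ≥ 2`, then
`capt(G) = α - r`. -/
theorem cop_win_iff_finite_rank_and_capture_time
    {V : Type*} [Fintype V] [Nonempty V] (G : RefGraph V) :
    (G.CopWin ↔ G.crGraph ≠ ⊤) ∧
    ∀ α r : ℕ, 2 ≤ α → G.crGraph = (α : ℕ∞) → G.RCopWin r α →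
      G.capt = α - r := by
  refine ⟨G.copWin_iff_exists_isCliqueSet.trans G.crGraph_ne_top_iff_exists_isCliqueSet.symm,
    fun α r hα hrank hr => ?_⟩
  obtain ⟨k, rfl⟩ : ∃ k, α = k + 2 := ⟨α - 2, by omega⟩
  rcases hr with ⟨rfl, hone⟩ | ⟨rfl, hzero⟩
  · rw [G.capt_eq_of_oneCopWin hrank hone]
    omega
  · exact G.capt_eq_of_not_oneCopWin hrank hzero
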